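/- arXiv:1306.2150 — 3 statements merged into one kernel-verified Lean document; each statement's English description precedes it below -/
import Mathlib

section
/- Let n ≥ 2 and let A₁ = G Gᵀ, A₂ = H Hᵀ, and let S be the discrete sine transform matrix of order n-1. Then A₁ ⊗ A₂ + A₂ ⊗ A₁ = (S ⊗ S)·(Λ₁ ⊗ Λ₂ + Λ₂ ⊗ Λ₁)·(S ⊗ S), where Λ₁ and Λ₂ are the diagonal matrices with diagonal entries λ_k = 4 sin²(kπ/(2n)) and μ_k = 4 cos²(kπ/(2n)) respectively; in particular Λ₁ ⊗ Λ₂ + Λ₂ ⊗ Λ₁ is the diagonal matrix whose ((i,j),(i,j)) entry equals λ_i μ_j + μ_i λ_j. -/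
open Matrix Real
open scoped Kronecker

def Emat (n : ℕ) : Matrix (Fin (n - 1)) (Fin n) ℝ :=
  Matrix.of fun i j => if (j : ℕ) = (i : ℕ) + 1 then 1 else 0

def Zmat (n : ℕ) : Matrix (Fin (n - 1)) (Fin n) ℝ :=
  Matrix.of fun i j => if (j : ℕ) = (i : ℕ) then 1 else 0

def Gmat (n : ℕ) : Matrix (Fin (n - 1)) (Fin n) ℝ := Emat n - Zmat n

def Hmat (n : ℕ) : Matrix (Fin (n - 1)) (Fin n) ℝ := Emat n + Zmat n

/-- The discrete sine transform matrix of order `n-1`. -/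
noncomputable def Smat (n : ℕ) : Matrix (Fin (n - 1)) (Fin (n - 1)) ℝ :=
  Matrix.of fun j k =>
    Real.sqrt (2 / n) * Real.sin (((j : ℕ) + 1) * ((k : ℕ) + 1) * Real.pi / n)

/-- `λ_k = 4 sin²(kπ/(2n))` (1-based `k`). -/
noncomputable def lamGG (n : ℕ) (k : Fin (n - 1)) : ℝ :=
  4 * Real.sin (((k : ℕ) + 1) * Real.pi / (2 * n)) ^ 2

/-- `μ_k = 4 cos²(kπ/(2n))` (1-based `k`). -/
noncomputable def muHH (n : ℕ) (k : Fin (n - 1)) : ℝ :=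
  4 * Real.cos (((k : ℕ) + 1) * Real.pi / (2 * n)) ^ 2


/-!
For a sequence `f` with `f 0 = f n = 0`, the vector `(f 1, …, f (n - 1))` is mapped by `Eᵀ` and
`Zᵀ` to the shifted samples `(f m)_{m<n}` and `(f (m + 1))_{m<n}`, so `G Gᵀ` and `H Hᵀ` act on it as
`f (j + 1) ↦ 2 f (j + 1) ∓ (f (j + 2) + f j)`. The columns of `S` are such samples of the sine wave
`r ↦ sin (r x)`, `x = (l + 1) π / n`, for which `f (j + 2) + f j = 2 cos x · f (j + 1)`; hence
`G Gᵀ S = S Λ₁` and `H Hᵀ S = S Λ₂` (half-angle formulas). The sampled sines are orthogonal (a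
geometric sum of cosines), which makes `S` an involution, so `Aᵢ = S Λᵢ S`, and the Kronecker identity
is the mixed-product rule.
-/

theorem Matrix.mul_eq_mul_diagonal_of_mulVec_col {m o R : Type*} [Fintype m] [Fintype o]
    [DecidableEq o] [CommSemiring R] {A : Matrix m m R} {S : Matrix m o R} {d : o → R}
    (h : ∀ l, A *ᵥ (fun k => S k l) = d l • fun k => S k l) : A * S = S * diagonal d := by
  ext i l
  rw [mul_diagonal]
  simpa [mul_apply, mulVec, dotProduct, mul_comm] using congrFun (h l) i

lemma sum_range_cos_int_mul_pi_div {n : ℕ} (hn : n ≠ 0) {m : ℤ} (hm : ¬ (2 * n : ℤ) ∣ m) :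
    ∑ k ∈ Finset.range n, cos (m * π / n * k) = sin (m * π / 2) ^ 2 := by
  have hnR : (n : ℝ) ≠ 0 := Nat.cast_ne_zero.2 hn
  have hhalf : sin (m * π / n / 2) ≠ 0 := by
    rw [Ne, Real.sin_eq_zero_iff]
    rintro ⟨k, hk⟩
    refine hm ⟨k, ?_⟩
    have : (m : ℝ) = 2 * n * k := by field_simp at hk; linarith [Real.pi_pos]
    exact_mod_cast this
  have hsum := Real.sin_mul_sum_cos n (m * π / n) 0
  simp only [add_zero] at hsum
  refine mul_left_cancel₀ hhalf (hsum.trans ?_)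
  have hθ : (n : ℝ) * (m * π / n) / 2 = m * π / 2 := by field_simp
  have hθ' : ((n : ℝ) - 1) * (m * π / n) / 2 = m * π / 2 - m * π / n / 2 := by field_simp
  have hsc : sin (m * π / 2) * cos (m * π / 2) = 0 := by
    rw [← mul_right_inj' two_ne_zero, ← mul_assoc, ← Real.sin_two_mul,
      show 2 * (m * π / 2) = m * π by ring, Real.sin_int_mul_pi, mul_zero]
  rw [hθ, hθ', Real.cos_sub]
  linear_combination cos (m * π / n / 2) * hsc

lemma sum_range_sin_mul_sin {n a b : ℕ} (ha₀ : 0 < a) (ha : a < n) (hb₀ : 0 < b) (hb : b < n) :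
    ∑ k ∈ Finset.range n, sin (a * π / n * k) * sin (b * π / n * k) =
      if a = b then (n : ℝ) / 2 else 0 := by
  have hn : n ≠ 0 := by omega
  have hprod (k : ℕ) : sin (a * π / n * k) * sin (b * π / n * k) =
      (cos (((a - b : ℤ) : ℝ) * π / n * k) - cos (((a + b : ℤ) : ℝ) * π / n * k)) / 2 := by
    push_cast
    rw [show ((a : ℝ) - b) * π / n * k = a * π / n * k - b * π / n * k by ring,
      show ((a : ℝ) + b) * π / n * k = a * π / n * k + b * π / n * k by ring,
      Real.cos_sub, Real.cos_add]
    ring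
  have hsum : ¬ (2 * n : ℤ) ∣ (a + b : ℤ) := fun h => by
    have := Int.eq_zero_of_abs_lt_dvd h (by rw [abs_lt]; omega)
    omega
  rw [Finset.sum_congr rfl fun k _ => hprod k, ← Finset.sum_div, Finset.sum_sub_distrib,
    sum_range_cos_int_mul_pi_div hn hsum]
  split_ifs with hab
  · subst hab
    simp only [sub_self, Int.cast_zero, zero_mul, zero_div, Real.cos_zero, Finset.sum_const,
      Finset.card_range, nsmul_eq_mul, mul_one]
    rw [show ((a + a : ℤ) : ℝ) * π / 2 = a * π by push_cast; ring, Real.sin_nat_mul_pi]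
    ring
  · have hdiff : ¬ (2 * n : ℤ) ∣ (a - b : ℤ) := fun h => by
      have := Int.eq_zero_of_abs_lt_dvd h (by rw [abs_lt]; omega)
      omega
    rw [sum_range_cos_int_mul_pi_div hn hdiff,
      show ((a + b : ℤ) : ℝ) * π / 2 = ((a - b : ℤ) : ℝ) * π / 2 + b * π by push_cast; ring,
      Real.sin_add_nat_mul_pi, mul_pow, ← pow_mul', pow_mul, neg_one_sq, one_pow, one_mul,
      sub_self, zero_div]

lemma Fin.sum_univ_sub_one_succ_eq_sum_range {M : Type*} [AddCommMonoid M] {n : ℕ} (hn : n ≠ 0)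
    (g : ℕ → M) (hg : g 0 = 0) : ∑ k : Fin (n - 1), g (k + 1) = ∑ k ∈ Finset.range n, g k := by
  obtain ⟨m, rfl⟩ := Nat.exists_eq_succ_of_ne_zero hn
  rw [Finset.sum_range_succ', hg, add_zero, ← Fin.sum_univ_eq_sum_range]
  rfl

section Shifts

variable {n : ℕ} (f : ℕ → ℝ)

lemma Emat_transpose_mulVec (hf : f 0 = 0) :
    (Emat n)ᵀ *ᵥ (fun k : Fin (n - 1) => f (k + 1)) = fun m : Fin n => f m := by
  ext ⟨m, hm⟩
  rcases m with _ | m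
  · simp [mulVec, dotProduct, Emat, hf]
  · rw [mulVec, dotProduct, Fintype.sum_eq_single ⟨m, by omega⟩]
    · simp [Emat]
    · intro k hk
      simp [Emat, Fin.ext_iff] at hk ⊢
      omega

lemma Zmat_transpose_mulVec (hf : f n = 0) :
    (Zmat n)ᵀ *ᵥ (fun k : Fin (n - 1) => f (k + 1)) = fun m : Fin n => f (m + 1) := by
  ext ⟨m, hm⟩
  by_cases h : m < n - 1
  · rw [mulVec, dotProduct, Fintype.sum_eq_single ⟨m, h⟩]
    · simp [Zmat]
    · intro k hk
      simp [Zmat, Fin.ext_iff] at hk ⊢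
      omega
  · have : m + 1 = n := by omega
    rw [mulVec, dotProduct, this]
    refine (Finset.sum_eq_zero fun k _ => ?_).trans hf.symm
    have := k.isLt
    simp only [transpose_apply, Zmat, of_apply, ite_mul, one_mul, zero_mul]
    rw [if_neg (by omega)]

lemma Emat_mulVec : Emat n *ᵥ (fun m : Fin n => f m) = fun j : Fin (n - 1) => f (j + 1) := by
  ext ⟨j, hj⟩
  rw [mulVec, dotProduct, Fintype.sum_eq_single ⟨j + 1, by omega⟩]
  · simp [Emat]
  · intro k hk
    simp [Emat, Fin.ext_iff] at hk ⊢
    omega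

lemma Zmat_mulVec : Zmat n *ᵥ (fun m : Fin n => f m) = fun j : Fin (n - 1) => f j := by
  ext ⟨j, hj⟩
  rw [mulVec, dotProduct, Fintype.sum_eq_single ⟨j, by omega⟩]
  · simp [Zmat]
  · intro k hk
    simp [Zmat, Fin.ext_iff] at hk ⊢
    omega

end Shifts

section SecondDifference

variable {n : ℕ} {f : ℕ → ℝ}

lemma Gmat_mul_transpose_mulVec (hf₀ : f 0 = 0) (hfₙ : f n = 0) :
    (Gmat n * (Gmat n)ᵀ) *ᵥ (fun k : Fin (n - 1) => f (k + 1)) =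
      fun j : Fin (n - 1) => 2 * f (j + 1) - (f (j + 2) + f j) := by
  rw [← mulVec_mulVec, Gmat, transpose_sub, sub_mulVec (Emat n)ᵀ, Emat_transpose_mulVec f hf₀,
    Zmat_transpose_mulVec f hfₙ, show (fun m : Fin n => f m) - (fun m : Fin n => f (m + 1)) =
      fun m : Fin n => (fun r => f r - f (r + 1)) (m : ℕ) from rfl,
    sub_mulVec, Emat_mulVec (fun r => f r - f (r + 1)), Zmat_mulVec (fun r => f r - f (r + 1))]
  ext j
  simp only [Pi.sub_apply]
  ring

lemma Hmat_mul_transpose_mulVec (hf₀ : f 0 = 0) (hfₙ : f n = 0) :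
    (Hmat n * (Hmat n)ᵀ) *ᵥ (fun k : Fin (n - 1) => f (k + 1)) =
      fun j : Fin (n - 1) => 2 * f (j + 1) + (f (j + 2) + f j) := by
  rw [← mulVec_mulVec, Hmat, transpose_add, add_mulVec (Emat n)ᵀ, Emat_transpose_mulVec f hf₀,
    Zmat_transpose_mulVec f hfₙ, show (fun m : Fin n => f m) + (fun m : Fin n => f (m + 1)) =
      fun m : Fin n => (fun r => f r + f (r + 1)) (m : ℕ) from rfl,
    add_mulVec, Emat_mulVec (fun r => f r + f (r + 1)), Zmat_mulVec (fun r => f r + f (r + 1))]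
  ext j
  simp only [Pi.add_apply]
  ring

end SecondDifference

section SineColumns

variable {n : ℕ} (l : Fin (n - 1))

lemma lamGG_apply : lamGG n l = 2 - 2 * cos ((l + 1 : ℕ) * π / n) := by
  rw [lamGG, show ((l + 1 : ℕ) * π / n : ℝ) = 2 * (((l : ℕ) + 1) * π / (2 * n)) by push_cast; ring,
    Real.cos_two_mul, Real.sin_sq]
  ring

lemma muHH_apply : muHH n l = 2 + 2 * cos ((l + 1 : ℕ) * π / n) := by
  rw [muHH, show ((l + 1 : ℕ) * π / n : ℝ) = 2 * (((l : ℕ) + 1) * π / (2 * n)) by push_cast; ring,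
    Real.cos_two_mul]
  ring

noncomputable def dstWave (r : ℕ) : ℝ := √(2 / n) * sin (r * ((l + 1 : ℕ) * π / n))

lemma Smat_col_eq_dstWave : (fun k => Smat n k l) = fun k : Fin (n - 1) => dstWave l (k + 1) := by
  ext k
  simp only [Smat, dstWave, of_apply]
  push_cast
  ring_nf

lemma dstWave_zero : dstWave l 0 = 0 := by simp [dstWave]

lemma dstWave_self : dstWave l n = 0 := by
  have hn : (n : ℝ) ≠ 0 := by have := l.isLt; norm_cast; omega
  rw [dstWave, mul_div_cancel₀ _ hn, Real.sin_nat_mul_pi, mul_zero]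

lemma dstWave_add_two_add_dstWave (r : ℕ) :
    dstWave l (r + 2) + dstWave l r = 2 * cos ((l + 1 : ℕ) * π / n) * dstWave l (r + 1) := by
  simp only [dstWave]
  rw [mul_left_comm, ← mul_add, Real.sin_add_sin]
  push_cast
  ring_nf

lemma Gmat_mul_transpose_mulVec_Smat_col :
    (Gmat n * (Gmat n)ᵀ) *ᵥ (fun k => Smat n k l) = lamGG n l • fun k => Smat n k l := by
  rw [Smat_col_eq_dstWave, Gmat_mul_transpose_mulVec (dstWave_zero l) (dstWave_self l)]
  ext j
  simp only [Pi.smul_apply, smul_eq_mul, lamGG_apply]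
  linear_combination -dstWave_add_two_add_dstWave l j

lemma Hmat_mul_transpose_mulVec_Smat_col :
    (Hmat n * (Hmat n)ᵀ) *ᵥ (fun k => Smat n k l) = muHH n l • fun k => Smat n k l := by
  rw [Smat_col_eq_dstWave, Hmat_mul_transpose_mulVec (dstWave_zero l) (dstWave_self l)]
  ext j
  simp only [Pi.smul_apply, smul_eq_mul, muHH_apply]
  linear_combination dstWave_add_two_add_dstWave l j

end SineColumns

lemma Smat_mul_self (n : ℕ) : Smat n * Smat n = 1 := by
  ext j l
  have hn : n ≠ 0 := by have := j.isLt; omega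
  set g : ℕ → ℝ := fun r => sin ((j + 1 : ℕ) * π / n * r) * sin ((l + 1 : ℕ) * π / n * r)
  have hterm (k : Fin (n - 1)) : Smat n j k * Smat n k l = 2 / n * g (k + 1) := by
    simp only [Smat, of_apply, g]
    rw [mul_mul_mul_comm, Real.mul_self_sqrt (by positivity)]
    push_cast
    ring_nf
  rw [mul_apply, Fintype.sum_congr _ _ hterm, ← Finset.mul_sum,
    Fin.sum_univ_sub_one_succ_eq_sum_range hn g (by simp [g]),
    sum_range_sin_mul_sin (by omega) (by omega) (by omega) (by omega), one_apply]
  simp only [add_left_inj, Fin.val_inj]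
  split_ifs
  · field_simp
  · rw [mul_zero]

lemma Gmat_mul_transpose_eq (n : ℕ) :
    Gmat n * (Gmat n)ᵀ = Smat n * diagonal (lamGG n) * Smat n := by
  rw [← mul_eq_mul_diagonal_of_mulVec_col Gmat_mul_transpose_mulVec_Smat_col, mul_assoc,
    Smat_mul_self, mul_one]

lemma Hmat_mul_transpose_eq (n : ℕ) :
    Hmat n * (Hmat n)ᵀ = Smat n * diagonal (muHH n) * Smat n := by
  rw [← mul_eq_mul_diagonal_of_mulVec_col Hmat_mul_transpose_mulVec_Smat_col, mul_assoc,
    Smat_mul_self, mul_one]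

theorem stmt7_general (n : ℕ) :
    ((Gmat n * (Gmat n)ᵀ) ⊗ₖ (Hmat n * (Hmat n)ᵀ) +
        (Hmat n * (Hmat n)ᵀ) ⊗ₖ (Gmat n * (Gmat n)ᵀ) =
      (Smat n ⊗ₖ Smat n) *
        (Matrix.diagonal (lamGG n) ⊗ₖ Matrix.diagonal (muHH n) +
          Matrix.diagonal (muHH n) ⊗ₖ Matrix.diagonal (lamGG n)) *
        (Smat n ⊗ₖ Smat n)) ∧
    Matrix.diagonal (lamGG n) ⊗ₖ Matrix.diagonal (muHH n) +
        Matrix.diagonal (muHH n) ⊗ₖ Matrix.diagonal (lamGG n) =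
      Matrix.diagonal (fun p : Fin (n - 1) × Fin (n - 1) =>
        lamGG n p.1 * muHH n p.2 + muHH n p.1 * lamGG n p.2) := by
  constructor
  · rw [Gmat_mul_transpose_eq, Hmat_mul_transpose_eq, Matrix.mul_add, Matrix.add_mul,
      ← mul_kronecker_mul, ← mul_kronecker_mul, ← mul_kronecker_mul, ← mul_kronecker_mul]
  · rw [diagonal_kronecker_diagonal, diagonal_kronecker_diagonal, diagonal_add]

/-- with `A₁ = G Gᵀ`, `A₂ = H Hᵀ`, `Λ₁ = diag(λ)`, `Λ₂ = diag(μ)`,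
`A₁ ⊗ A₂ + A₂ ⊗ A₁ = (S ⊗ S)(Λ₁ ⊗ Λ₂ + Λ₂ ⊗ Λ₁)(S ⊗ S)`; in particular
`Λ₁ ⊗ Λ₂ + Λ₂ ⊗ Λ₁` is the diagonal matrix with entries `λ_i μ_j + μ_i λ_j`. -/
theorem stmt7 (n : ℕ) (hn : 2 ≤ n) :
    ((Gmat n * (Gmat n)ᵀ) ⊗ₖ (Hmat n * (Hmat n)ᵀ) +
        (Hmat n * (Hmat n)ᵀ) ⊗ₖ (Gmat n * (Gmat n)ᵀ) =
      (Smat n ⊗ₖ Smat n) *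
        (Matrix.diagonal (lamGG n) ⊗ₖ Matrix.diagonal (muHH n) +
          Matrix.diagonal (muHH n) ⊗ₖ Matrix.diagonal (lamGG n)) *
        (Smat n ⊗ₖ Smat n)) ∧
    Matrix.diagonal (lamGG n) ⊗ₖ Matrix.diagonal (muHH n) +
        Matrix.diagonal (muHH n) ⊗ₖ Matrix.diagonal (lamGG n) =
      Matrix.diagonal (fun p : Fin (n - 1) × Fin (n - 1) =>
        lamGG n p.1 * muHH n p.2 + muHH n p.1 * lamGG n p.2) :=
  stmt7_general n
end

section
/- Let M be an m × n real matrix with rank(M) = r, and suppose I ⊆ {1,…,m} and J ⊆ {1,…,n} are index sets of cardinality r such that the r × r submatrix M(I,J) is invertible. Then M admits the skeleton (cross) decomposition M = M(:,J) · M(I,J)⁻¹ · M(I,:), where M(:,J) is the m × r matrix of the columns of M indexed by J and M(I,:) is the r × n matrix of the rows of M indexed by I. In particular, a rank-r matrix is completely recovered from r of its columns and r of its rows containing an invertible r × r intersection. -/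
/-!
Let `C = M(:,J)` and `A = M(I,J)`. Since `A` is a row selection of `C`, `rank C ≥ rank A = r ≥
rank M`; as the columns of `C` are columns of `M`, `C` and `M` have the same column space, so
`M = C X` for some `X`. Selecting the rows `I` gives `M(I,:) = A X`, hence `X = A⁻¹ M(I,:)`.
-/

namespace Matrix

variable {R K : Type*} {m n r : Type*} [Fintype r]

theorem range_mulVecLin_submatrix_id_le [Fintype n] [CommSemiring R] (M : Matrix m n R)
    (J : r → n) :
    LinearMap.range (M.submatrix id J).mulVecLin ≤ LinearMap.range M.mulVecLin := by
  rw [range_mulVecLin, range_mulVecLin]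
  exact Submodule.span_mono fun _ ⟨j, hj⟩ => ⟨J j, hj⟩

theorem exists_eq_mul_of_range_mulVecLin_le [Fintype n] [CommSemiring R] {C : Matrix m r R}
    {M : Matrix m n R} (h : LinearMap.range M.mulVecLin ≤ LinearMap.range C.mulVecLin) :
    ∃ X : Matrix r n R, M = C * X := by
  classical
  have hcol (j : n) : ∃ x : r → R, C *ᵥ x = M.col j :=
    h ⟨Pi.single j 1, mulVec_single_one M j⟩
  choose x hx using hcol
  refine ⟨(of x)ᵀ, ?_⟩
  ext i j
  simpa [mulVec, dotProduct, mul_apply] using (congrFun (hx j) i).symm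

theorem eq_mul_inv_mul_submatrix_of_eq_mul [CommRing R] [DecidableEq r] {M : Matrix m n R}
    {C : Matrix m r R} {X : Matrix r n R} (hM : M = C * X) (I : r → m)
    (hA : IsUnit (C.submatrix I id)) :
    M = C * (C.submatrix I id)⁻¹ * M.submatrix I id := by
  have hrows : M.submatrix I id = C.submatrix I id * X := by
    rw [hM, submatrix_mul _ _ I id id Function.bijective_id]
    rfl
  rw [hrows, Matrix.mul_assoc, ← Matrix.mul_assoc (C.submatrix I id)⁻¹,
    nonsing_inv_mul _ ((isUnit_iff_isUnit_det _).mp hA), Matrix.one_mul, hM]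

theorem eq_submatrix_mul_inv_mul_submatrix [Fintype n] [Field K] [Fintype m] [DecidableEq r]
    (M : Matrix m n K) (I : r → m) (J : r → n) (hA : IsUnit (M.submatrix I J))
    (hrank : M.rank ≤ Fintype.card r) :
    M = M.submatrix id J * (M.submatrix I J)⁻¹ * M.submatrix I id := by
  set C := M.submatrix id J
  have hCA : C.submatrix I id = M.submatrix I J := rfl
  have hMC : M.rank ≤ C.rank :=
    calc M.rank ≤ Fintype.card r := hrank
      _ = (C.submatrix I id).rank := (rank_of_isUnit _ hA).symm
      _ ≤ C.rank := rank_submatrix_le C I id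
  have hrange : LinearMap.range C.mulVecLin = LinearMap.range M.mulVecLin :=
    Submodule.eq_of_le_of_finrank_le (range_mulVecLin_submatrix_id_le M J) hMC
  obtain ⟨X, hX⟩ := exists_eq_mul_of_range_mulVecLin_le hrange.ge
  rw [← hCA] at hA ⊢
  exact eq_mul_inv_mul_submatrix_of_eq_mul hX I hA

end Matrix

theorem stmt12_general (m n r : ℕ) (M : Matrix (Fin m) (Fin n) ℝ) (hrank : M.rank = r)
    (I : Fin r → Fin m) (J : Fin r → Fin n)
    (hinv : IsUnit (M.submatrix I J)) :
    M = M.submatrix id J * (M.submatrix I J)⁻¹ * M.submatrix I id :=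
  M.eq_submatrix_mul_inv_mul_submatrix I J hinv (by rw [hrank, Fintype.card_fin])

/-- skeleton (cross) decomposition. If `M` is an `m × n` real matrix of
rank `r`, and `I`, `J` select `r` rows and `r` columns (injective index maps) such that
the `r × r` submatrix `M(I,J)` is invertible, then
`M = M(:,J) · M(I,J)⁻¹ · M(I,:)`. -/
theorem stmt12 (m n r : ℕ) (M : Matrix (Fin m) (Fin n) ℝ) (hrank : M.rank = r)
    (I : Fin r → Fin m) (J : Fin r → Fin n)
    (hI : Function.Injective I) (hJ : Function.Injective J)
    (hinv : IsUnit (M.submatrix I J)) :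
    M = M.submatrix id J * (M.submatrix I J)⁻¹ * M.submatrix I id :=
  stmt12_general m n r M hrank I J hinv
end

section
/- Let n ≥ 2 and consider the discrete gradient B = [B_x; B_y] with B_x = (1/(4h))·(G ⊗ H) and B_y = (1/(4h))·(H ⊗ G), h = 1/n. The kernel of B, identified with the space of n × n real matrices P satisfying G P Hᵀ = 0 and H P Gᵀ = 0, is exactly two-dimensional: it is spanned by the all-ones matrix (P_{ij} = 1) and the checkerboard matrix (P_{ij} = (−1)^{i+j}). Consequently the Schur complement Bᵀ A⁻¹ B of the two-dimensional semi-staggered Stokes discretization has exactly 2 zero eigenvalues. -/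
open Matrix
open scoped Kronecker

/-- The all-ones `n × n` matrix. -/
def onesM (n : ℕ) : Matrix (Fin n) (Fin n) ℝ := Matrix.of fun _ _ => 1

/-- The `n × n` checkerboard matrix `P_{ij} = (−1)^{i+j}`. -/
def checkerM (n : ℕ) : Matrix (Fin n) (Fin n) ℝ :=
  Matrix.of fun i j => (-1 : ℝ) ^ ((i : ℕ) + (j : ℕ))

/-!
Writing `G = E - Z` and `H = E + Z`, the sum and difference of `G P Hᵀ` and `H P Gᵀ` are
`2 (E P Eᵀ - Z P Zᵀ)` and `2 (E P Zᵀ - Z P Eᵀ)`. So `P` lies in the kernel iff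
`P (i+1) (j+1) = P i j` and `P (i+1) j = P i (j+1)`: `P` is constant along diagonals and
anti-diagonals, hence determined by `P 0 0` and `P 0 1`, which gives the all-ones and
checkerboard matrices.

For the Schur complement, `yᵀ G` and `yᵀ H` determine `y` (forward substitution), so
`G Gᵀ` and `H Hᵀ` are positive definite, hence so are `B_x B_xᵀ = (4h)⁻² (G Gᵀ ⊗ H Hᵀ)`, `Δ`, `A`
and `A⁻¹`. Therefore `ker (Bᵀ A⁻¹ B) = ker B`, which is the vectorized two-dimensional kernel.
-/

section Shifts

variable {m : ℕ} {ι : Type*}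

lemma Emat_apply (i : Fin m) (j : Fin (m + 1)) :
    Emat (m + 1) i j = if j = i.succ then 1 else 0 := by
  simp [Emat, Fin.ext_iff]

lemma Zmat_apply (i : Fin m) (j : Fin (m + 1)) :
    Zmat (m + 1) i j = if j = i.castSucc then 1 else 0 := by
  simp [Zmat, Fin.ext_iff]

lemma Emat_mul_apply (P : Matrix (Fin (m + 1)) ι ℝ) (i : Fin m) (l : ι) :
    (Emat (m + 1) * P) i l = P i.succ l := by
  simp [mul_apply, Emat_apply]

lemma Zmat_mul_apply (P : Matrix (Fin (m + 1)) ι ℝ) (i : Fin m) (l : ι) :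
    (Zmat (m + 1) * P) i l = P i.castSucc l := by
  simp [mul_apply, Zmat_apply]

lemma mul_transpose_Emat_apply (P : Matrix ι (Fin (m + 1)) ℝ) (l : ι) (j : Fin m) :
    (P * (Emat (m + 1))ᵀ) l j = P l j.succ := by
  simp [mul_apply, Emat_apply]

lemma mul_transpose_Zmat_apply (P : Matrix ι (Fin (m + 1)) ℝ) (l : ι) (j : Fin m) :
    (P * (Zmat (m + 1))ᵀ) l j = P l j.castSucc := by
  simp [mul_apply, Zmat_apply]

lemma vecMul_Emat_zero (y : Fin m → ℝ) : (y ᵥ* Emat (m + 1)) 0 = 0 := by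
  simp [vecMul, dotProduct, Emat_apply, (Fin.succ_ne_zero _).symm]

lemma vecMul_Emat_succ (y : Fin m → ℝ) (j : Fin m) : (y ᵥ* Emat (m + 1)) j.succ = y j := by
  simp [vecMul, dotProduct, Emat_apply]

lemma vecMul_Zmat_castSucc (y : Fin m → ℝ) (j : Fin m) :
    (y ᵥ* Zmat (m + 1)) j.castSucc = y j := by
  simp [vecMul, dotProduct, Zmat_apply]

lemma vecMul_Emat_add_smul_Zmat_injective {s : ℝ} (hs : s ≠ 0) :
    Function.Injective (Emat (m + 1) + s • Zmat (m + 1)).vecMul := by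
  suffices h : ∀ y : Fin m → ℝ, y ᵥ* (Emat (m + 1) + s • Zmat (m + 1)) = 0 → y = 0 from
    fun y₁ y₂ h₁₂ => sub_eq_zero.mp (h _ (by rw [sub_vecMul]; exact sub_eq_zero.mpr h₁₂))
  intro y hy
  have hcol : ∀ j, (y ᵥ* Emat (m + 1)) j + s * (y ᵥ* Zmat (m + 1)) j = 0 := fun j => by
    simpa [vecMul_add, vecMul_smul] using congrFun hy j
  cases m with
  | zero => exact Subsingleton.elim _ _
  | succ m =>
    funext k
    induction k using Fin.induction with
    | zero =>
      have h₀ := hcol (Fin.castSucc 0)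
      rw [vecMul_Zmat_castSucc, Fin.castSucc_zero, vecMul_Emat_zero, zero_add] at h₀
      simpa [hs] using h₀
    | succ k ih =>
      have hk := hcol k.succ.castSucc
      rw [vecMul_Zmat_castSucc, ← Fin.succ_castSucc, vecMul_Emat_succ, ih, Pi.zero_apply,
        zero_add] at hk
      simpa [hs] using hk

lemma vecMul_Gmat_injective : Function.Injective (Gmat (m + 1)).vecMul := by
  simpa [Gmat, sub_eq_add_neg] using vecMul_Emat_add_smul_Zmat_injective (m := m) (s := -1)
    (by norm_num)

lemma vecMul_Hmat_injective : Function.Injective (Hmat (m + 1)).vecMul := by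
  simpa [Hmat] using vecMul_Emat_add_smul_Zmat_injective (m := m) (s := 1) one_ne_zero

end Shifts

section Kernel

lemma sub_mul_mul_add_transpose_eq_zero_and_iff {ι κ : Type*} [Fintype κ]
    (E Z : Matrix ι κ ℝ) (P : Matrix κ κ ℝ) :
    ((E - Z) * P * (E + Z)ᵀ = 0 ∧ (E + Z) * P * (E - Z)ᵀ = 0) ↔
      (E * P * Eᵀ = Z * P * Zᵀ ∧ E * P * Zᵀ = Z * P * Eᵀ) := by
  set a := E * P * Eᵀ - Z * P * Zᵀ
  set b := E * P * Zᵀ - Z * P * Eᵀ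
  have hGH : (E - Z) * P * (E + Z)ᵀ = a + b := by
    simp only [a, b, transpose_add, Matrix.sub_mul, Matrix.mul_add]; abel
  have hHG : (E + Z) * P * (E - Z)ᵀ = a - b := by
    simp only [a, b, transpose_sub, Matrix.add_mul, Matrix.mul_sub]; abel
  rw [hGH, hHG, ← sub_eq_zero (a := E * P * Eᵀ), ← sub_eq_zero (a := E * P * Zᵀ)]
  change a + b = 0 ∧ a - b = 0 ↔ a = 0 ∧ b = 0
  constructor
  · rintro ⟨h₁, h₂⟩
    constructor
    · calc a = (2 : ℝ)⁻¹ • ((a + b) + (a - b)) := by module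
        _ = 0 := by rw [h₁, h₂]; simp
    · calc b = (2 : ℝ)⁻¹ • ((a + b) - (a - b)) := by module
        _ = 0 := by rw [h₁, h₂]; simp
  · rintro ⟨h₁, h₂⟩
    simp [h₁, h₂]

variable {m : ℕ}

lemma gradient_eq_zero_iff_shift (P : Matrix (Fin (m + 1)) (Fin (m + 1)) ℝ) :
    (Gmat (m + 1) * P * (Hmat (m + 1))ᵀ = 0 ∧ Hmat (m + 1) * P * (Gmat (m + 1))ᵀ = 0) ↔
      (∀ i j : Fin m, P i.succ j.succ = P i.castSucc j.castSucc) ∧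
        ∀ i j : Fin m, P i.succ j.castSucc = P i.castSucc j.succ := by
  rw [Gmat, Hmat, sub_mul_mul_add_transpose_eq_zero_and_iff]
  simp only [← Matrix.ext_iff, Emat_mul_apply, Zmat_mul_apply, mul_transpose_Emat_apply,
    mul_transpose_Zmat_apply]
  rfl

lemma eq_zero_of_shift_invariant (Q : Matrix (Fin (m + 2)) (Fin (m + 2)) ℝ)
    (hdiag : ∀ i j : Fin (m + 1), Q i.succ j.succ = Q i.castSucc j.castSucc)
    (hanti : ∀ i j : Fin (m + 1), Q i.succ j.castSucc = Q i.castSucc j.succ)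
    (h₀₀ : Q 0 0 = 0) (h₀₁ : Q 0 1 = 0) : Q = 0 := by
  -- row 0 alone satisfies no one-step recursion, rows 0 and 1 together do
  have first_rows : ∀ j, Q 0 j = 0 ∧ Q 1 j = 0 := by
    intro j
    induction j using Fin.induction with
    | zero => exact ⟨h₀₀, by simpa [h₀₁] using hanti 0 0⟩
    | succ j ih =>
      constructor
      · simpa [ih.2] using (hanti 0 j).symm
      · simpa [ih.1] using hdiag 0 j
  ext i j
  induction i using Fin.induction generalizing j with
  | zero => exact (first_rows j).1
  | succ i ih =>
    induction j using Fin.cases with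
    | zero => simpa [ih] using hanti i 0
    | succ j => simpa [ih] using hdiag i j

lemma smul_onesM_add_smul_checkerM_apply {n : ℕ} (a b : ℝ) (i j : Fin n) :
    (a • onesM n + b • checkerM n) i j = a + b * (-1) ^ ((i : ℕ) + j) := by
  simp [onesM, checkerM]

lemma gradient_eq_zero_iff_exists (P : Matrix (Fin (m + 2)) (Fin (m + 2)) ℝ) :
    (Gmat (m + 2) * P * (Hmat (m + 2))ᵀ = 0 ∧ Hmat (m + 2) * P * (Gmat (m + 2))ᵀ = 0) ↔
      ∃ a b : ℝ, P = a • onesM (m + 2) + b • checkerM (m + 2) := by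
  rw [gradient_eq_zero_iff_shift]
  constructor
  · rintro ⟨hdiag, hanti⟩
    refine ⟨(P 0 0 + P 0 1) / 2, (P 0 0 - P 0 1) / 2, sub_eq_zero.mp ?_⟩
    apply eq_zero_of_shift_invariant
    all_goals
      intros
      simp only [Matrix.sub_apply, smul_onesM_add_smul_checkerM_apply, Fin.val_succ,
        Fin.val_castSucc, Fin.val_zero, Fin.val_one, hdiag, hanti]
      ring
  · rintro ⟨a, b, rfl⟩
    refine ⟨fun i j => ?_, fun i j => ?_⟩ <;>
      simp only [smul_onesM_add_smul_checkerM_apply, Fin.val_succ, Fin.val_castSucc] <;> ring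

lemma linearIndependent_onesM_checkerM :
    LinearIndependent ℝ ![onesM (m + 2), checkerM (m + 2)] := by
  refine LinearIndependent.pair_iff.mpr fun s t hst => ?_
  have h₀₀ := congrFun₂ hst 0 0
  have h₀₁ := congrFun₂ hst 0 1
  simp only [smul_onesM_add_smul_checkerM_apply, Fin.val_zero, Fin.val_one] at h₀₀ h₀₁
  norm_num at h₀₀ h₀₁
  constructor <;> linarith

end Kernel

section Schur

variable {ι κ ι' κ' : Type*}

def stackRows {R : Type*} (X Y : Matrix ι κ R) : Matrix (Fin 2 × ι) κ R :=
  Matrix.of fun p q => if p.1 = 0 then X p.2 q else Y p.2 q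

lemma stackRows_mulVec_eq_zero_iff [Fintype κ] (X Y : Matrix ι κ ℝ) (x : κ → ℝ) :
    stackRows X Y *ᵥ x = 0 ↔ X *ᵥ x = 0 ∧ Y *ᵥ x = 0 := by
  simp only [funext_iff, Prod.forall, Fin.forall_fin_two, Pi.zero_apply]
  simp [stackRows, mulVec, dotProduct]

/-- Row-major vectorization, the convention `(G ⊗ H) vec P = vec (G P Hᵀ)` of the paper;
Mathlib's `vec` stacks columns. -/
def vecTransposeEquiv (R : Type*) [Semiring R] : Matrix ι κ R ≃ₗ[R] (ι × κ → R) where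
  toFun P := vec Pᵀ
  invFun x := Matrix.of fun i j => x (i, j)
  map_add' _ _ := rfl
  map_smul' _ _ := rfl
  left_inv _ := rfl
  right_inv _ := rfl

@[simp]
lemma vecTransposeEquiv_apply {R : Type*} [Semiring R] (P : Matrix ι κ R) :
    vecTransposeEquiv R P = vec Pᵀ :=
  rfl

lemma kronecker_mulVec_vec_transpose [Fintype κ] [Fintype κ'] {R : Type*} [CommSemiring R]
    (M : Matrix ι κ R) (N : Matrix ι' κ' R) (P : Matrix κ κ' R) :
    (M ⊗ₖ N) *ᵥ vec Pᵀ = vec (M * P * Nᵀ)ᵀ := by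
  rw [kronecker_mulVec_vec, transpose_mul, transpose_mul, transpose_transpose, Matrix.mul_assoc]

lemma ker_mulVecLin_transpose_mul_mul [Fintype ι] [Fintype κ] {M : Matrix ι ι ℝ}
    (hM : M.PosDef) (B : Matrix ι κ ℝ) :
    LinearMap.ker (Bᵀ * M * B).mulVecLin = LinearMap.ker B.mulVecLin := by
  ext x
  simp only [LinearMap.mem_ker, mulVecLin_apply]
  refine ⟨fun hx => ?_, fun hx => by rw [← mulVec_mulVec, hx, mulVec_zero]⟩
  by_contra hBx
  have hquad : star (B *ᵥ x) ⬝ᵥ M *ᵥ (B *ᵥ x) = x ⬝ᵥ (Bᵀ * M * B) *ᵥ x := by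
    rw [star_trivial, ← mulVec_mulVec, ← mulVec_mulVec, dotProduct_mulVec x Bᵀ, vecMul_transpose]
  exact (hM.dotProduct_mulVec_pos hBx).ne' (by rw [hquad, hx, dotProduct_zero])

lemma posDef_smul_kronecker_mul_transpose [Fintype ι] [Fintype κ] [Fintype ι'] [Fintype κ']
    {c : ℝ} (hc : c ≠ 0) {M : Matrix ι κ ℝ} {N : Matrix ι' κ' ℝ}
    (hM : Function.Injective M.vecMul) (hN : Function.Injective N.vecMul) :
    ((c • (M ⊗ₖ N)) * (c • (M ⊗ₖ N))ᵀ).PosDef := by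
  rw [transpose_smul, ← kroneckerMap_transpose, Matrix.smul_mul, Matrix.mul_smul, smul_smul,
    ← mul_kronecker_mul]
  simpa only [conjTranspose_eq_transpose_of_trivial] using
    ((PosDef.mul_conjTranspose_self M hM).kronecker (PosDef.mul_conjTranspose_self N hN)).smul
      (mul_self_pos.mpr hc)

lemma ker_stackRows_gradient {m : ℕ} {c : ℝ} (hc : c ≠ 0) :
    LinearMap.ker (stackRows (c • (Gmat (m + 2) ⊗ₖ Hmat (m + 2)))
        (c • (Hmat (m + 2) ⊗ₖ Gmat (m + 2)))).mulVecLin =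
      (Submodule.span ℝ (Set.range ![onesM (m + 2), checkerM (m + 2)])).map
        (vecTransposeEquiv ℝ).toLinearMap := by
  ext x
  obtain ⟨P, rfl⟩ := (vecTransposeEquiv ℝ).surjective x
  rw [Submodule.mem_map_equiv, LinearEquiv.symm_apply_apply, range_cons_cons_empty,
    Submodule.mem_span_pair, LinearMap.mem_ker, mulVecLin_apply, vecTransposeEquiv_apply,
    stackRows_mulVec_eq_zero_iff, smul_mulVec, smul_mulVec, kronecker_mulVec_vec_transpose,
    kronecker_mulVec_vec_transpose]
  simp only [smul_eq_zero, hc, false_or, vec_eq_zero_iff, transpose_eq_zero]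
  rw [gradient_eq_zero_iff_exists]
  simp only [eq_comm]

end Schur

/-- the kernel of the 2D discrete gradient `B = [B_x; B_y]`, identified
with the matrices `P` with `G P Hᵀ = 0` and `H P Gᵀ = 0`, is exactly the two-dimensional
space spanned by the all-ones matrix and the checkerboard matrix; consequently the Schur
complement `Bᵀ A⁻¹ B` (with `A = I₂ ⊗ Δ`) has exactly 2 zero eigenvalues. -/
theorem stmt17 (n : ℕ) (hn : 2 ≤ n) (h : ℝ) (hh : h = 1 / n)
    (Bx By : Matrix (Fin (n - 1) × Fin (n - 1)) (Fin n × Fin n) ℝ)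
    (hBx : Bx = (1 / (4 * h)) • (Gmat n ⊗ₖ Hmat n))
    (hBy : By = (1 / (4 * h)) • (Hmat n ⊗ₖ Gmat n))
    (B : Matrix ((Fin 2) × (Fin (n - 1) × Fin (n - 1))) (Fin n × Fin n) ℝ)
    (hB : B = Matrix.of fun p q => if p.1 = 0 then Bx p.2 q else By p.2 q)
    (Δ : Matrix (Fin (n - 1) × Fin (n - 1)) (Fin (n - 1) × Fin (n - 1)) ℝ)
    (hΔ : Δ = Bx * Bxᵀ + By * Byᵀ)
    (A : Matrix ((Fin 2) × (Fin (n - 1) × Fin (n - 1)))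
          ((Fin 2) × (Fin (n - 1) × Fin (n - 1))) ℝ)
    (hA : A = (1 : Matrix (Fin 2) (Fin 2) ℝ) ⊗ₖ Δ) :
    (∀ P : Matrix (Fin n) (Fin n) ℝ,
      (Gmat n * P * (Hmat n)ᵀ = 0 ∧ Hmat n * P * (Gmat n)ᵀ = 0) ↔
        ∃ a b : ℝ, P = a • onesM n + b • checkerM n) ∧
    LinearIndependent ℝ ![onesM n, checkerM n] ∧
    Module.finrank ℝ (LinearMap.ker (Bᵀ * A⁻¹ * B).mulVecLin) = 2 := by
  obtain ⟨m, rfl⟩ : ∃ m, n = m + 2 := ⟨n - 2, by omega⟩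
  have hc : 1 / (4 * h) ≠ 0 := by rw [hh]; positivity
  have hBxpos : (Bx * Bxᵀ).PosDef :=
    hBx ▸ posDef_smul_kronecker_mul_transpose hc vecMul_Gmat_injective vecMul_Hmat_injective
  have hBypos : (By * Byᵀ).PosSemidef := by
    simpa only [conjTranspose_eq_transpose_of_trivial] using posSemidef_self_mul_conjTranspose By
  have hΔpos : Δ.PosDef := hΔ ▸ hBxpos.add_posSemidef hBypos
  have hApos : A.PosDef := hA ▸ PosDef.one.kronecker hΔpos
  refine ⟨gradient_eq_zero_iff_exists, linearIndependent_onesM_checkerM, ?_⟩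
  rw [ker_mulVecLin_transpose_mul_mul hApos.inv, show B = stackRows Bx By from hB, hBx, hBy,
    ker_stackRows_gradient hc, LinearEquiv.finrank_map_eq,
    finrank_span_eq_card linearIndependent_onesM_checkerM, Fintype.card_fin]
end
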